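/- arXiv:1902.03106 — 4 statements merged into one kernel-verified Lean document; each statement's English description precedes it below -/
import Mathlib

section
/- Let γ > 1 and define χ(π) = γπ/(1+π) and b(π) = π/(2π+1). Then for all π with 0 < π < 1/(γ-1) and π ≤ 1, we have b(π) < χ(π) < 1. -/
lemma div_two_mul_add_one_lt_mul_div_one_add {γ π : ℝ} (hγ : 1 ≤ γ) (hπ : 0 < π) :
    π / (2 * π + 1) < γ * π / (1 + π) :=
  calc π / (2 * π + 1) < π / (1 + π) := div_lt_div_of_pos_left hπ (by linarith) (by linarith)
    _ ≤ γ * π / (1 + π) := by gcongr; exact le_mul_of_one_le_left hπ.le hγ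

lemma mul_div_one_add_lt_one {γ π : ℝ} (hπ : -1 < π) (h : (γ - 1) * π < 1) :
    γ * π / (1 + π) < 1 := by
  rw [div_lt_one (by linarith)]
  linarith

theorem stmt_6_general (γ : ℝ) (hγ : 1 < γ) (π : ℝ)
    (h0 : 0 < π) (h1 : π < 1 / (γ - 1)) :
    π / (2 * π + 1) < γ * π / (1 + π) ∧ γ * π / (1 + π) < 1 := by
  have h : (γ - 1) * π < 1 := by
    rwa [lt_div_iff₀ (sub_pos.2 hγ), mul_comm] at h1
  exact ⟨div_two_mul_add_one_lt_mul_div_one_add hγ.le h0, mul_div_one_add_lt_one (by linarith) h⟩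

/-- first relativistic compressibility condition for the CIG indicatrix. -/
theorem stmt_6 (γ : ℝ) (hγ : 1 < γ) (π : ℝ)
    (h0 : 0 < π) (h1 : π < 1 / (γ - 1)) (h2 : π ≤ 1) :
    π / (2 * π + 1) < γ * π / (1 + π) ∧ γ * π / (1 + π) < 1 :=
  stmt_6_general γ hγ π h0 h1
end

section
/- Let γ > 1 and define χ(π) = γπ/(1+π), so that χ'(π) = γ/(1+π)². Then for π > 0, the inequality (1+π)(χ(π) - π)·χ'(π) + 2χ(π)(1 - χ(π)) > 0 holds if and only if π < (γ+1)/(2γ-1). -/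
theorem compressibility_expr_eq_div (γ π : ℝ) (hπ : 1 + π ≠ 0) :
    (1 + π) * (γ * π / (1 + π) - π) * (γ / (1 + π) ^ 2)
        + 2 * (γ * π / (1 + π)) * (1 - γ * π / (1 + π))
      = γ * π * (γ + 1 - (2 * γ - 1) * π) / (1 + π) ^ 2 := by
  field_simp
  ring

/-- the second relativistic compressibility condition for the CIG indicatrix
    holds iff π < (γ+1)/(2γ-1). -/
theorem stmt_7 (γ : ℝ) (hγ : 1 < γ) (π : ℝ) (h0 : 0 < π) :
    ((1 + π) * (γ * π / (1 + π) - π) * (γ / (1 + π) ^ 2)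
        + 2 * (γ * π / (1 + π)) * (1 - γ * π / (1 + π)) > 0)
      ↔ π < (γ + 1) / (2 * γ - 1) := by
  have hγπ : 0 < γ * π := by positivity
  have hslope : 0 < 2 * γ - 1 := by linarith
  rw [gt_iff_lt, compressibility_expr_eq_div γ π (by positivity),
    div_pos_iff_of_pos_right (by positivity), mul_pos_iff_of_pos_left hγπ, sub_pos,
    lt_div_iff₀ hslope, mul_comm]
end

section
/- Let γ ≥ 5/3 and define n(ρ,p) = ρ - p/(γ-1) for ρ > 0, p > 0. Then there is no π ∈ (0,1) such that, setting p = πρ, the Taub inequality n(ρ,p)² ≤ ρ(ρ - 3p) holds. -/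
/- Write `k = 1/(γ - 1)`, so that `n = ρ (1 - kπ)`. Then
`(1 - kπ)² - (1 - 3π) = π (k²π + 3 - 2k)`, which is positive for `π > 0` as soon as
`k ≤ 3/2`, i.e. `γ ≥ 5/3`. -/

lemma one_sub_three_mul_lt_sq_one_sub_mul {k π : ℝ} (hk : k ≤ 3 / 2) (hπ : 0 < π) :
    1 - 3 * π < (1 - k * π) ^ 2 := by
  have hquad : 0 < k ^ 2 * π + (3 - 2 * k) := by
    rcases le_or_gt k 0 with hk0 | hk0
    · nlinarith [sq_nonneg k]
    · nlinarith [mul_pos (pow_pos hk0 2) hπ]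
  nlinarith [mul_pos hπ hquad]

lemma one_div_sub_one_le_three_halves {γ : ℝ} (hγ : 5 / 3 ≤ γ) : 1 / (γ - 1) ≤ 3 / 2 := by
  rw [div_le_iff₀ (by linarith)]
  linarith

/-- for γ ≥ 5/3 the Taub inequality n² ≤ ρ(ρ - 3p) fails for every π ∈ (0,1). -/
theorem stmt_9 (γ : ℝ) (hγ : 5 / 3 ≤ γ) (ρ : ℝ) (hρ : 0 < ρ) :
    ¬ ∃ π : ℝ, 0 < π ∧ π < 1 ∧
      (ρ - π * ρ / (γ - 1)) ^ 2 ≤ ρ * (ρ - 3 * (π * ρ)) := by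
  rintro ⟨π, hπ, -, htaub⟩
  have hlt := mul_lt_mul_of_pos_left
    (one_sub_three_mul_lt_sq_one_sub_mul (one_div_sub_one_le_three_halves hγ) hπ) (pow_pos hρ 2)
  have hn : ρ - π * ρ / (γ - 1) = ρ * (1 - 1 / (γ - 1) * π) := by ring
  rw [hn] at htaub
  nlinarith
end

section
/- Let α, β : I → ℝ be twice differentiable on an interval I with α(t) ≠ 0 for all t ∈ I. Suppose the four functions P = 3αȦ - 4α̇A, Q = 3βȦ + 3αḂ - 4α̇B - 4β̇A, R = 3βḂ + 3αĊ - 4β̇B - 4α̇C, S = 3βĊ - 4β̇C vanish identically on I, where A = 2αα̈ - α̇² + 3α^(2-γ), B = 2(αβ̈ + βα̈ - α̇β̇ + 3βα^(1-γ)), C = 2ββ̈ - β̇² + 3β²α^(-γ), for some γ > 1 and α > 0. Then α³S - βα²R + β²αQ - β³P = 4α⁶·((β/α)˙)³, and consequently β = c·α on I for some constant c. -/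
/-!
The combination `α³S - βα²R + β²αQ - β³P` contains no derivative of `A`, `B`, `C`: their
coefficients cancel. Substituting the definitions of `A`, `B`, `C`, in which
`α^(2-γ) = α² α^(-γ)` and `α^(1-γ) = α α^(-γ)`, the second derivatives and the `γ`-terms cancel
as well, leaving `4 (β̇α - βα̇)³`. Hence the Wronskian `β̇α - βα̇` vanishes, i.e. `β/α` has zero
derivative on the interval and is constant.
-/

theorem consistency_combination_eq (a b a' b' a'' b'' A B C A' B' C' p : ℝ)
    (hA : A = 2 * a * a'' - a' ^ 2 + 3 * a ^ 2 * p)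
    (hB : B = 2 * (a * b'' + b * a'' - a' * b' + 3 * b * (a * p)))
    (hC : C = 2 * b * b'' - b' ^ 2 + 3 * b ^ 2 * p) :
    a ^ 3 * (3 * b * C' - 4 * b' * C)
        - b * a ^ 2 * (3 * b * B' + 3 * a * C' - 4 * b' * B - 4 * a' * C)
        + b ^ 2 * a * (3 * b * A' + 3 * a * B' - 4 * a' * B - 4 * b' * A)
        - b ^ 3 * (3 * a * A' - 4 * a' * A)
      = 4 * (b' * a - b * a') ^ 3 := by
  subst hA hB hC
  ring

theorem Convex.eq_of_hasDerivWithinAt_eq_zero {E : Type*} [NormedAddCommGroup E]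
    [NormedSpace ℝ E] {s : Set ℝ} (hs : Convex ℝ s) {f : ℝ → E}
    (hf : ∀ x ∈ s, HasDerivWithinAt f 0 s x) {x y : ℝ} (hx : x ∈ s) (hy : y ∈ s) :
    f y = f x := by
  have h := hs.norm_image_sub_le_of_norm_hasDerivWithin_le (C := 0) hf (fun _ _ => by simp) hx hy
  rwa [zero_mul, norm_le_zero_iff, sub_eq_zero] at h

theorem exists_eq_const_mul_of_wronskian_eq_zero {I : Set ℝ} (hI : I.OrdConnected)
    {f g f' g' : ℝ → ℝ} (hf0 : ∀ t ∈ I, f t ≠ 0)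
    (hf : ∀ t ∈ I, HasDerivAt f (f' t) t) (hg : ∀ t ∈ I, HasDerivAt g (g' t) t)
    (hW : ∀ t ∈ I, g' t * f t - g t * f' t = 0) :
    ∃ c : ℝ, ∀ t ∈ I, g t = c * f t := by
  rcases I.eq_empty_or_nonempty with rfl | ⟨t₀, ht₀⟩
  · exact ⟨0, by simp⟩
  have hquot : ∀ t ∈ I, HasDerivWithinAt (fun x => g x / f x) 0 I t := fun t ht => by
    have h := (hg t ht).div (hf t ht) (hf0 t ht)
    rw [hW t ht, zero_div] at h
    exact h.hasDerivWithinAt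
  refine ⟨g t₀ / f t₀, fun t ht => ?_⟩
  rw [← hI.convex.eq_of_hasDerivWithinAt_eq_zero hquot ht₀ ht, div_mul_cancel₀ _ (hf0 t ht)]

theorem stmt_18_general (γ : ℝ) (I : Set ℝ) (hI : I.OrdConnected)
    (α β α' β' α'' β'' A B C A' B' C' : ℝ → ℝ)
    (hαpos : ∀ t ∈ I, 0 < α t)
    (hdα : ∀ t ∈ I, HasDerivAt α (α' t) t)
    (hdβ : ∀ t ∈ I, HasDerivAt β (β' t) t)
    (hA : ∀ t ∈ I, A t = 2 * α t * α'' t - (α' t) ^ 2 + 3 * α t ^ (2 - γ))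
    (hB : ∀ t ∈ I, B t = 2 * (α t * β'' t + β t * α'' t - α' t * β' t + 3 * β t * α t ^ (1 - γ)))
    (hC : ∀ t ∈ I, C t = 2 * β t * β'' t - (β' t) ^ 2 + 3 * β t ^ 2 * α t ^ (-γ))
    (hP : ∀ t ∈ I, 3 * α t * A' t - 4 * α' t * A t = 0)
    (hQ : ∀ t ∈ I, 3 * β t * A' t + 3 * α t * B' t - 4 * α' t * B t - 4 * β' t * A t = 0)
    (hR : ∀ t ∈ I, 3 * β t * B' t + 3 * α t * C' t - 4 * β' t * B t - 4 * α' t * C t = 0)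
    (hS : ∀ t ∈ I, 3 * β t * C' t - 4 * β' t * C t = 0) :
    (∀ t ∈ I,
      α t ^ 3 * (3 * β t * C' t - 4 * β' t * C t)
        - β t * α t ^ 2 * (3 * β t * B' t + 3 * α t * C' t - 4 * β' t * B t - 4 * α' t * C t)
        + β t ^ 2 * α t * (3 * β t * A' t + 3 * α t * B' t - 4 * α' t * B t - 4 * β' t * A t)
        - β t ^ 3 * (3 * α t * A' t - 4 * α' t * A t)
      = 4 * α t ^ 6 * ((β' t * α t - β t * α' t) / α t ^ 2) ^ 3) ∧
    ∃ c : ℝ, ∀ t ∈ I, β t = c * α t := by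
  have hcomb (t : ℝ) (ht : t ∈ I) :=
    have hpos := hαpos t ht
    consistency_combination_eq (α t) (β t) (α' t) (β' t) (α'' t) (β'' t) (A t) (B t) (C t)
      (A' t) (B' t) (C' t) (α t ^ (-γ))
      (by rw [hA t ht, Real.rpow_sub hpos, Real.rpow_neg hpos.le, Real.rpow_two]; ring)
      (by rw [hB t ht, Real.rpow_sub hpos, Real.rpow_neg hpos.le, Real.rpow_one]; ring)
      (hC t ht)
  have hW : ∀ t ∈ I, β' t * α t - β t * α' t = 0 := fun t ht => by
    have h := hcomb t ht
    rw [hS t ht, hR t ht, hQ t ht, hP t ht] at h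
    simpa using h.symm
  refine ⟨fun t ht => ?_, exists_eq_const_mul_of_wronskian_eq_zero hI
    (fun t ht => (hαpos t ht).ne') hdα hdβ hW⟩
  rw [hcomb t ht, hW t ht]
  ring

/-- the consistency equations P = Q = R = S = 0 for geodesic spherically
    symmetric CIG solutions force β = c·α (FLRW limit). Dots are derivatives w.r.t. t,
    provided here through `HasDerivAt` hypotheses. -/
theorem stmt_18 (γ : ℝ) (hγ : 1 < γ) (I : Set ℝ) (hI : I.OrdConnected)
    (α β α' β' α'' β'' A B C A' B' C' : ℝ → ℝ)
    (hαpos : ∀ t ∈ I, 0 < α t)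
    (hdα : ∀ t ∈ I, HasDerivAt α (α' t) t) (hdα' : ∀ t ∈ I, HasDerivAt α' (α'' t) t)
    (hdβ : ∀ t ∈ I, HasDerivAt β (β' t) t) (hdβ' : ∀ t ∈ I, HasDerivAt β' (β'' t) t)
    (hA : ∀ t ∈ I, A t = 2 * α t * α'' t - (α' t) ^ 2 + 3 * α t ^ (2 - γ))
    (hB : ∀ t ∈ I, B t = 2 * (α t * β'' t + β t * α'' t - α' t * β' t + 3 * β t * α t ^ (1 - γ)))
    (hC : ∀ t ∈ I, C t = 2 * β t * β'' t - (β' t) ^ 2 + 3 * β t ^ 2 * α t ^ (-γ))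
    (hdA : ∀ t ∈ I, HasDerivAt A (A' t) t)
    (hdB : ∀ t ∈ I, HasDerivAt B (B' t) t)
    (hdC : ∀ t ∈ I, HasDerivAt C (C' t) t)
    (hP : ∀ t ∈ I, 3 * α t * A' t - 4 * α' t * A t = 0)
    (hQ : ∀ t ∈ I, 3 * β t * A' t + 3 * α t * B' t - 4 * α' t * B t - 4 * β' t * A t = 0)
    (hR : ∀ t ∈ I, 3 * β t * B' t + 3 * α t * C' t - 4 * β' t * B t - 4 * α' t * C t = 0)
    (hS : ∀ t ∈ I, 3 * β t * C' t - 4 * β' t * C t = 0) :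
    (∀ t ∈ I,
      α t ^ 3 * (3 * β t * C' t - 4 * β' t * C t)
        - β t * α t ^ 2 * (3 * β t * B' t + 3 * α t * C' t - 4 * β' t * B t - 4 * α' t * C t)
        + β t ^ 2 * α t * (3 * β t * A' t + 3 * α t * B' t - 4 * α' t * B t - 4 * β' t * A t)
        - β t ^ 3 * (3 * α t * A' t - 4 * α' t * A t)
      = 4 * α t ^ 6 * ((β' t * α t - β t * α' t) / α t ^ 2) ^ 3) ∧
    ∃ c : ℝ, ∀ t ∈ I, β t = c * α t :=
  stmt_18_general γ I hI α β α' β' α'' β'' A B C A' B' C' hαpos hdα hdβ hA hB hC hP hQ hR hS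
end
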